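/- Let n ≥ 5 and q = 2n+1. In the group (ℤ/qℤ)², every nonzero element of the cyclic subgroup generated by (1, 2n-2) has Lee weight at least 4, where the Lee weight of (a,b) is the sum of the minimal absolute-value representatives of a and b modulo q. -/
import Mathlib


/-- The Lee weight of an element of ℤ/qℤ: the minimal absolute value of an
integer representative, i.e. min(x̄, q - x̄) for the representative x̄ ∈ {0,…,q-1}. -/
def leeWeight (q : ℕ) (x : ZMod q) [NeZero q] : ℕ := min x.val (q - x.val)

lemma lee_neg (q : ℕ) [NeZero q] (x : ZMod q) : leeWeight q (-x) = leeWeight q x := by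
  unfold leeWeight
  rcases eq_or_ne x 0 with rfl | hx
  · simp
  · haveI : NeZero x := ⟨hx⟩
    rw [ZMod.val_neg_of_ne_zero x]
    have h1 : x.val < q := ZMod.val_lt x
    omega

lemma key (n : ℕ) (hn : 5 ≤ n) (x : ZMod (2 * n + 1)) (hx : x ≠ 0) :
    4 ≤ leeWeight (2 * n + 1) x + leeWeight (2 * n + 1) (-3 * x) := by
  haveI : NeZero (2 * n + 1) := ⟨by omega⟩
  have hv : x.val < 2 * n + 1 := ZMod.val_lt x
  have hv0 : x.val ≠ 0 := fun h => hx (by rwa [← ZMod.val_eq_zero])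
  have hxv : ((x.val : ℕ) : ZMod (2 * n + 1)) = x := by
    rw [ZMod.natCast_val, ZMod.cast_id]
  have hA : leeWeight (2 * n + 1) x = min x.val (2 * n + 1 - x.val) := rfl
  by_cases h4 : 4 ≤ min x.val (2 * n + 1 - x.val)
  · omega
  · rcases le_or_gt x.val (2 * n + 1 - x.val) with hle | hle
    · -- x.val ≤ 3
      have hv3 : x.val ≤ 3 := by omega
      have h3x : -3 * x = -(((3 * x.val : ℕ) : ZMod (2 * n + 1))) := by
        push_cast
        rw [hxv]; ring
      have h3lt : 3 * x.val < 2 * n + 1 := by omega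
      have hB : leeWeight (2 * n + 1) (-3 * x)
          = min (3 * x.val) (2 * n + 1 - 3 * x.val) := by
        rw [h3x, lee_neg]
        unfold leeWeight
        rw [ZMod.val_cast_of_lt h3lt]
      rw [hA, hB]
      omega
    · -- 2n+1 - x.val ≤ 3
      set w := 2 * n + 1 - x.val with hw
      have hw3 : w ≤ 3 := by omega
      have hw0 : w ≠ 0 := by omega
      have hsum : ((x.val + w : ℕ) : ZMod (2 * n + 1)) = 0 := by
        rw [show x.val + w = 2 * n + 1 by omega, ZMod.natCast_self]
      have hneg : -x = ((w : ℕ) : ZMod (2 * n + 1)) := by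
        push_cast at hsum
        rw [hxv] at hsum
        linear_combination -hsum
      have h3x : -3 * x = (((3 * w : ℕ) : ZMod (2 * n + 1))) := by
        have h' : -3 * x = 3 * (-x) := by ring
        rw [h', hneg]; push_cast; ring
      have h3lt : 3 * w < 2 * n + 1 := by omega
      have hB : leeWeight (2 * n + 1) (-3 * x)
          = min (3 * w) (2 * n + 1 - 3 * w) := by
        rw [h3x]
        unfold leeWeight
        rw [ZMod.val_cast_of_lt h3lt]
      rw [hA, hB]
      omega

/-- For q = 2n+1 with n ≥ 5, every nonzero element of the cyclic subgroup of
(ℤ/qℤ)² generated by (1, 2n-2) has Lee weight at least 4. -/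
theorem stmt_16 (n q : ℕ) (hn : 5 ≤ n) (hq : q = 2 * n + 1) [NeZero q] :
    ∀ z ∈ AddSubgroup.zmultiples ((1 : ZMod q), ((2 * n - 2 : ℕ) : ZMod q)),
      z ≠ 0 → 4 ≤ leeWeight q z.1 + leeWeight q z.2 := by
  subst hq
  have hc : ((2 * n - 2 : ℕ) : ZMod (2 * n + 1)) = -3 := by
    have h1 : ((2 * n - 2 : ℕ) : ZMod (2 * n + 1)) + 3
        = ((2 * n + 1 : ℕ) : ZMod (2 * n + 1)) := by
      rw [show (3 : ZMod (2 * n + 1)) = ((3 : ℕ) : ZMod (2 * n + 1)) by push_cast; ring,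
        ← Nat.cast_add]
      congr 1; omega
    rw [ZMod.natCast_self] at h1
    linear_combination h1
  intro z hz hz0
  rw [AddSubgroup.mem_zmultiples_iff] at hz
  obtain ⟨k, rfl⟩ := hz
  have h1 : (k • ((1 : ZMod (2 * n + 1)), ((2 * n - 2 : ℕ) : ZMod (2 * n + 1)))).1
      = (k : ZMod (2 * n + 1)) := by
    simp [zsmul_eq_mul]
  have h2 : (k • ((1 : ZMod (2 * n + 1)), ((2 * n - 2 : ℕ) : ZMod (2 * n + 1)))).2
      = -3 * (k : ZMod (2 * n + 1)) := by
    simp [zsmul_eq_mul, hc]; ring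
  rw [h1, h2]
  apply key n hn
  intro hk0
  exact hz0 (Prod.ext (by rw [h1, hk0, Prod.fst_zero]) (by rw [h2, hk0, Prod.snd_zero]; ring))
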